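/- arXiv:2103.16374 — 4 statements merged into one kernel-verified Lean document; each statement's English description precedes it below -/
import Mathlib

section
/- The element ξ_{1234} does not belong to the derived subalgebra K'_4 of the conformal superalgebra K_4; more precisely, K'_4 is the ℂ-linear span of the set {∂^k ξ_I : I a strictly increasing sequence in {1,2,3,4}, I ≠ (1,2,3,4), k ≥ 0} ∪ {∂^l ξ_{1234} : l > 0}. -/
/-!
The conformal superalgebra `K₄ = ℂ[∂] ⊗ Λ(4)`, a free `ℂ[∂]`-module with basis the
monomials `ξ_I` (`I ⊆ {1,2,3,4}` increasing), with `λ`-bracket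
`[ξ_I λ ξ_J] = (|I|-2) ∂ξ_{IJ} + (-1)^{|I|} ∑ᵢ ∂ᵢξ_I ∂ᵢξ_J + λ (|I|+|J|-4) ξ_{IJ}`,
i.e. with `n`-products (`[a λ b] = ∑ₙ (λⁿ/n!) (a₍ₙ₎b)`)
`(ξ_I ₍₀₎ ξ_J) = (|I|-2) ∂ξ_{IJ} + (-1)^{|I|} ∑ᵢ ∂ᵢξ_I ∂ᵢξ_J`,
`(ξ_I ₍₁₎ ξ_J) = (|I|+|J|-4) ξ_{IJ}`, `(ξ_I ₍ₙ₎ ξ_J) = 0` for `n ≥ 2`,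
extended to all of `K₄` by the axioms `(∂a ₍₀₎ b) = 0`, `(∂a ₍ₙ₎ b) = -n (a ₍ₙ₋₁₎ b)`
and `(a ₍ₙ₎ ∂b) = ∂(a ₍ₙ₎ b) + n (a ₍ₙ₋₁₎ b)`.
-/

open Finset

noncomputable section

/-- Index set of a Grassmann monomial in `ξ₁,…,ξ₄` (0-indexed). -/
abbrev Idx : Type := Finset (Fin 4)

/-- Sign with which two Grassmann monomials multiply: `ξ_I ξ_J = msign I J • ξ_{I ∪ J}`
for `I, J` disjoint. -/
def msign (I J : Idx) : ℤ := (-1 : ℤ) ^ ((I ×ˢ J).filter (fun p => p.2 < p.1)).card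

/-- Sign of `∂ᵢ ξ_I` (for `i ∈ I`): `∂ᵢ ξ_I = dsign i I • ξ_{I \ {i}}`. -/
def dsign (i : Fin 4) (I : Idx) : ℤ := (-1 : ℤ) ^ (I.filter (fun j => j < i)).card

/-- The conformal superalgebra `K₄ = ℂ[∂] ⊗ Λ(4)`, with basis `∂^k ξ_I`. -/
abbrev K4 : Type := (ℕ × Idx) →₀ ℂ

/-- The basis element `∂^k ξ_I` of `K₄`. -/
def pb (k : ℕ) (I : Idx) : K4 := Finsupp.single (k, I) 1

/-- The operator `∂` on `K₄`. -/
def der : K4 →ₗ[ℂ] K4 := Finsupp.lmapDomain ℂ ℂ (fun p => (p.1 + 1, p.2))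

/-- `∂^k ξ_I ξ_J` (zero if `I, J` are not disjoint). -/
def xi4 (k : ℕ) (I J : Idx) : K4 :=
  if Disjoint I J then ((msign I J : ℤ) : ℂ) • pb k (I ∪ J) else 0

/-- `∑ᵢ ∂ᵢξ_I ∂ᵢξ_J`. -/
def dd4 (I J : Idx) : K4 :=
  ∑ i : Fin 4,
    if i ∈ I ∧ i ∈ J then
      ((dsign i I * dsign i J : ℤ) : ℂ) • xi4 0 (I.erase i) (J.erase i)
    else 0

/-- The `0`-product `(ξ_I ₍₀₎ ξ_J) = (|I|-2) ∂ξ_{IJ} + (-1)^{|I|} ∑ᵢ ∂ᵢξ_I ∂ᵢξ_J`. -/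
def prod0 (I J : Idx) : K4 :=
  (((I.card : ℤ) - 2 : ℤ) : ℂ) • xi4 1 I J + ((-1 : ℂ) ^ I.card) • dd4 I J

/-- The `1`-product `(ξ_I ₍₁₎ ξ_J) = (|I|+|J|-4) ξ_{IJ}`. -/
def prod1 (I J : Idx) : K4 :=
  (((I.card : ℤ) + (J.card : ℤ) - 4 : ℤ) : ℂ) • xi4 0 I J

/-!
Let `c` (`topCoeff`) be the coefficient of `ξ₁₂₃₄ = ∂⁰ξ_{1234}` in the basis `∂^k ξ_I`.
It vanishes on `∂K₄` and on every product of monomials `ξ_I ₍ₙ₎ ξ_J`: the `0`-product only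
produces `∂ξ_{IJ}` and monomials missing an index, while the `1`-product `(|I|+|J|-4) ξ_{IJ}`
has a zero coefficient exactly when `ξ_{IJ} = ±ξ₁₂₃₄`. The sesquilinearity axioms move `∂` out
of the factors modulo `∂K₄`, so `c` vanishes on all products, hence on `K'₄`. Conversely `K'₄`
is `∂`-stable and contains `ξ_I = (|I|-4)⁻¹ (ξ_I ₍₁₎ 1)` for `I ≠ (1,2,3,4)` and
`∂ξ₁₂₃₄ = ½ (ξ₁₂₃₄ ₍₀₎ 1)`, so `K'₄` is exactly the kernel of `c`.
-/

section ConformalProducts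

variable {R M N : Type*} [CommRing R] [AddCommGroup M] [Module R M] [AddCommGroup N] [Module R N]

def productSpan (p : ℕ → M →ₗ[R] M →ₗ[R] M) : Submodule R M :=
  Submodule.span R {z : M | ∃ (n : ℕ) (a b : M), z = p n a b}

variable {D : M →ₗ[R] M} {p : ℕ → M →ₗ[R] M →ₗ[R] M}

theorem apply_mem_productSpan
    (hdr : ∀ (n : ℕ) (a b : M), p n a (D b) = D (p n a b) + (n : R) • p (n - 1) a b)
    {x : M} (hx : x ∈ productSpan p) : D x ∈ productSpan p := by
  suffices h : productSpan p ≤ (productSpan p).comap D from h hx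
  refine Submodule.span_le.2 ?_
  rintro _ ⟨n, a, b, rfl⟩
  rw [SetLike.mem_coe, Submodule.mem_comap, eq_sub_of_add_eq (hdr n a b).symm]
  exact sub_mem (Submodule.subset_span ⟨n, a, D b, rfl⟩)
    (Submodule.smul_mem _ _ (Submodule.subset_span ⟨n - 1, a, b, rfl⟩))

theorem iterate_mem_productSpan
    (hdr : ∀ (n : ℕ) (a b : M), p n a (D b) = D (p n a b) + (n : R) • p (n - 1) a b)
    {x : M} (hx : x ∈ productSpan p) (k : ℕ) : D^[k] x ∈ productSpan p := by
  induction k with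
  | zero => exact hx
  | succ k ih => exact Function.iterate_succ_apply' D k x ▸ apply_mem_productSpan hdr ih

theorem map_product_iterate_eq_zero (f : M →ₗ[R] N) (hf : ∀ x, f (D x) = 0)
    (hdl0 : ∀ a b : M, p 0 (D a) b = 0)
    (hdl : ∀ (n : ℕ) (a b : M), p (n + 1) (D a) b = (-((n : R) + 1)) • p n a b)
    (hdr : ∀ (n : ℕ) (a b : M), p n a (D b) = D (p n a b) + (n : R) • p (n - 1) a b)
    {a b : M} (hab : ∀ n, f (p n a b) = 0) (k l n : ℕ) :
    f (p n (D^[k] a) (D^[l] b)) = 0 := by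
  induction k generalizing n with
  | zero =>
    induction l generalizing n with
    | zero => exact hab n
    | succ l ih =>
      rw [Function.iterate_succ_apply', hdr, map_add, hf, map_smul, ih, smul_zero, add_zero]
  | succ k ih =>
    rw [Function.iterate_succ_apply']
    cases n with
    | zero => rw [hdl0, map_zero]
    | succ n => rw [hdl, map_smul, ih, smul_zero]

end ConformalProducts

def topCoeff : K4 →ₗ[ℂ] ℂ := Finsupp.lapply ((0 : ℕ), (Finset.univ : Idx))

theorem topCoeff_pb (k : ℕ) (I : Idx) :
    topCoeff (pb k I) = if k = 0 ∧ I = Finset.univ then 1 else 0 := by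
  simp [topCoeff, pb, Finsupp.single_apply]

theorem der_pb (k : ℕ) (I : Idx) : der (pb k I) = pb (k + 1) I := by
  simp [der, pb, Finsupp.lmapDomain_apply, Finsupp.mapDomain_single]

theorem iterate_der_pb (j k : ℕ) (I : Idx) : der^[k] (pb j I) = pb (j + k) I := by
  induction k with
  | zero => rfl
  | succ k ih => rw [Function.iterate_succ_apply', ih, der_pb, add_assoc]

theorem single_eq_smul_pb (q : ℕ × Idx) (c : ℂ) : Finsupp.single q c = c • pb q.1 q.2 := by
  simp [pb]

theorem topCoeff_der (x : K4) : topCoeff (der x) = 0 :=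
  Finsupp.mapDomain_of_notMem_range x _ (by simp)

theorem xi4_empty_right (k : ℕ) (I : Idx) : xi4 k I ∅ = pb k I := by
  simp [xi4, msign]

theorem topCoeff_xi4_succ (k : ℕ) (I J : Idx) : topCoeff (xi4 (k + 1) I J) = 0 := by
  unfold xi4
  split_ifs <;> simp [topCoeff_pb]

theorem topCoeff_xi4_of_union_ne (k : ℕ) {I J : Idx} (h : I ∪ J ≠ Finset.univ) :
    topCoeff (xi4 k I J) = 0 := by
  unfold xi4
  split_ifs <;> simp [topCoeff_pb, h]

theorem topCoeff_dd4 (I J : Idx) : topCoeff (dd4 I J) = 0 := by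
  refine (map_sum _ _ _).trans (Finset.sum_eq_zero fun i _ => ?_)
  split_ifs
  · have hi : I.erase i ∪ J.erase i ≠ Finset.univ := fun h => by
      simpa using Finset.eq_univ_iff_forall.1 h i
    rw [map_smul, topCoeff_xi4_of_union_ne 0 hi, smul_zero]
  · exact map_zero _

theorem topCoeff_prod0 (I J : Idx) : topCoeff (prod0 I J) = 0 := by
  simp [prod0, topCoeff_xi4_succ, topCoeff_dd4]

theorem topCoeff_prod1 (I J : Idx) : topCoeff (prod1 I J) = 0 := by
  rw [prod1, map_smul]
  by_cases hd : Disjoint I J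
  · by_cases hu : I ∪ J = Finset.univ
    · have hcard : I.card + J.card = 4 := by
        simpa [hu] using (Finset.card_union_of_disjoint hd).symm
      have hzero : (I.card : ℤ) + J.card - 4 = 0 := by omega
      rw [hzero, Int.cast_zero, zero_smul]
    · rw [topCoeff_xi4_of_union_ne 0 hu, smul_zero]
  · simp [xi4, hd]

theorem topCoeff_product_eq_zero (p : ℕ → K4 →ₗ[ℂ] K4 →ₗ[ℂ] K4)
    (h0 : ∀ I J : Idx, p 0 (pb 0 I) (pb 0 J) = prod0 I J)
    (h1 : ∀ I J : Idx, p 1 (pb 0 I) (pb 0 J) = prod1 I J)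
    (h2 : ∀ n : ℕ, 2 ≤ n → ∀ I J : Idx, p n (pb 0 I) (pb 0 J) = 0)
    (hdl0 : ∀ a b : K4, p 0 (der a) b = 0)
    (hdl : ∀ (n : ℕ) (a b : K4), p (n + 1) (der a) b = (-((n : ℂ) + 1)) • p n a b)
    (hdr : ∀ (n : ℕ) (a b : K4), p n a (der b) = der (p n a b) + (n : ℂ) • p (n - 1) a b)
    (n : ℕ) (a b : K4) : topCoeff (p n a b) = 0 := by
  have hpb : ∀ (k l : ℕ) (I J : Idx), topCoeff (p n (pb k I) (pb l J)) = 0 := by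
    intro k l I J
    rw [← zero_add k, ← zero_add l, ← iterate_der_pb, ← iterate_der_pb]
    refine map_product_iterate_eq_zero topCoeff topCoeff_der hdl0 hdl hdr (fun m => ?_) k l n
    rcases m with _ | _ | m
    · rw [h0]; exact topCoeff_prod0 I J
    · rw [h1]; exact topCoeff_prod1 I J
    · rw [h2 _ (by omega)]; exact map_zero _
  have hbilin : (p n).compr₂ topCoeff = 0 :=
    Finsupp.lhom_ext fun q c => Finsupp.lhom_ext fun r d => by
      simp [single_eq_smul_pb, hpb]
  exact LinearMap.congr_fun₂ hbilin a b

theorem ker_topCoeff : LinearMap.ker topCoeff = Submodule.span ℂ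
    ({z : K4 | ∃ (k : ℕ) (I : Idx), I ≠ Finset.univ ∧ z = pb k I}
      ∪ {z : K4 | ∃ l : ℕ, 0 < l ∧ z = pb l Finset.univ}) := by
  have hker :
      LinearMap.ker topCoeff = Finsupp.supported ℂ ℂ {((0 : ℕ), (Finset.univ : Idx))}ᶜ := by
    ext x
    simp [Finsupp.mem_supported', topCoeff]
  rw [hker, Finsupp.supported_eq_span_single]
  congr 1
  ext z
  simp only [Set.mem_image, Set.mem_compl_iff, Set.mem_singleton_iff, Prod.exists, Prod.mk.injEq,
    not_and, ne_eq, pb, Set.mem_union, Set.mem_ofPred_eq]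
  constructor
  · rintro ⟨k, I, hkI, rfl⟩
    by_cases hI : I = Finset.univ
    · subst hI
      exact Or.inr ⟨k, Nat.pos_of_ne_zero fun hk => hkI hk rfl, rfl⟩
    · exact Or.inl ⟨k, I, hI, rfl⟩
  · rintro (⟨k, I, hI, rfl⟩ | ⟨l, hl, rfl⟩)
    · exact ⟨k, I, fun _ => hI, rfl⟩
    · exact ⟨l, Finset.univ, fun h => absurd h hl.ne', rfl⟩

theorem pb_mem_productSpan_of_ne_univ {p : ℕ → K4 →ₗ[ℂ] K4 →ₗ[ℂ] K4}
    (h1 : ∀ I J : Idx, p 1 (pb 0 I) (pb 0 J) = prod1 I J) {I : Idx} (hI : I ≠ Finset.univ) :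
    pb 0 I ∈ productSpan p := by
  have hcard : (I.card : ℂ) - 4 ≠ 0 :=
    sub_ne_zero.2 (by exact_mod_cast ((Finset.card_lt_iff_ne_univ I).2 hI).ne)
  have hprod : p 1 (pb 0 I) (pb 0 ∅) = ((I.card : ℂ) - 4) • pb 0 I := by
    simp [h1, prod1, xi4_empty_right]
  rw [← inv_smul_smul₀ hcard (pb 0 I), ← hprod]
  exact Submodule.smul_mem _ _ (Submodule.subset_span ⟨1, _, _, rfl⟩)

theorem pb_one_univ_mem_productSpan {p : ℕ → K4 →ₗ[ℂ] K4 →ₗ[ℂ] K4}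
    (h0 : ∀ I J : Idx, p 0 (pb 0 I) (pb 0 J) = prod0 I J) :
    pb 1 Finset.univ ∈ productSpan p := by
  have hprod : p 0 (pb 0 Finset.univ) (pb 0 ∅) = (2 : ℂ) • pb 1 Finset.univ := by
    simp [h0, prod0, xi4_empty_right, dd4]
  rw [← inv_smul_smul₀ (two_ne_zero : (2 : ℂ) ≠ 0) (pb 1 Finset.univ), ← hprod]
  exact Submodule.smul_mem _ _ (Submodule.subset_span ⟨0, _, _, rfl⟩)

/-- **`ξ₁₂₃₄ ∉ K'₄`** (Proposition `xi1234`).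
The derived subalgebra `K'₄` of the conformal superalgebra `K₄`, i.e. the ℂ-span of all the
`n`-products `a ₍ₙ₎ b`, does not contain `ξ₁₂₃₄`; more precisely,
`K'₄` is the ℂ-linear span of
`{∂^k ξ_I : I ≠ (1,2,3,4), k ≥ 0} ∪ {∂^l ξ₁₂₃₄ : l > 0}`. -/
theorem derived_K4_conformal
    (p : ℕ → K4 →ₗ[ℂ] K4 →ₗ[ℂ] K4)
    (h0 : ∀ I J : Idx, p 0 (pb 0 I) (pb 0 J) = prod0 I J)
    (h1 : ∀ I J : Idx, p 1 (pb 0 I) (pb 0 J) = prod1 I J)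
    (h2 : ∀ n : ℕ, 2 ≤ n → ∀ I J : Idx, p n (pb 0 I) (pb 0 J) = 0)
    (hdl0 : ∀ a b : K4, p 0 (der a) b = 0)
    (hdl : ∀ (n : ℕ) (a b : K4), p (n + 1) (der a) b = (-((n : ℂ) + 1)) • p n a b)
    (hdr : ∀ (n : ℕ) (a b : K4), p n a (der b) = der (p n a b) + (n : ℂ) • p (n - 1) a b) :
    pb 0 Finset.univ ∉ Submodule.span ℂ {z : K4 | ∃ (n : ℕ) (a b : K4), z = p n a b} ∧
    Submodule.span ℂ {z : K4 | ∃ (n : ℕ) (a b : K4), z = p n a b}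
      = Submodule.span ℂ
          ({z : K4 | ∃ (k : ℕ) (I : Idx), I ≠ Finset.univ ∧ z = pb k I}
            ∪ {z : K4 | ∃ l : ℕ, 0 < l ∧ z = pb l Finset.univ}) := by
  have hle : productSpan p ≤ LinearMap.ker topCoeff := Submodule.span_le.2 <| by
    rintro _ ⟨n, a, b, rfl⟩
    exact topCoeff_product_eq_zero p h0 h1 h2 hdl0 hdl hdr n a b
  have hge : LinearMap.ker topCoeff ≤ productSpan p := by
    rw [ker_topCoeff, Submodule.span_le]
    rintro _ (⟨k, I, hI, rfl⟩ | ⟨l, hl, rfl⟩)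
    · simpa [iterate_der_pb] using
        iterate_mem_productSpan hdr (pb_mem_productSpan_of_ne_univ h1 hI) k
    · simpa [iterate_der_pb, Nat.add_sub_cancel' hl] using
        iterate_mem_productSpan hdr (pb_one_univ_mem_productSpan h0) (l - 1)
  refine ⟨fun h => ?_, (le_antisymm hle hge).trans ker_topCoeff⟩
  simpa [topCoeff_pb] using hle h

end
end

section
/- The element t^{-1}ξ_{1234} does not belong to the derived algebra K'(1,4) = [K(1,4),K(1,4)]; more precisely, K'(1,4) is the ℂ-linear span of {t^k ξ_I : I a strictly increasing sequence in {1,2,3,4}, I ≠ (1,2,3,4), k ∈ ℤ} ∪ {t^l ξ_{1234} : l ∈ ℤ, l ≠ −1}. -/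
/-!
The contact Lie superalgebra `K(1,4)` is identified with `Λ(1,4) = ℂ[t,t⁻¹] ⊗ Λ(4)`,
with basis the monomials `t^m ξ_I` (`m ∈ ℤ`, `I ⊆ {1,2,3,4}` increasing), and bracket
`[t^m ξ_I, t^n ξ_J] = (2n - 2m - n|I| + m|J|) t^{m+n-1} ξ_{IJ}
   + (-1)^{|I|} t^{m+n} ∑ᵢ ∂ᵢξ_I ∂ᵢξ_J`.
-/

open Finset

noncomputable section

/-- `K(1,4) = Λ(1,4) = ℂ[t,t⁻¹] ⊗ Λ(4)`, with basis `t^m ξ_I`. -/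
abbrev K14 : Type := (ℤ × Idx) →₀ ℂ

/-- The basis monomial `t^m ξ_I` of `K(1,4)`. -/
def bas (m : ℤ) (I : Idx) : K14 := Finsupp.single (m, I) 1

/-- `t^m ξ_I ξ_J` (zero if `I, J` are not disjoint). -/
def xiMul (m : ℤ) (I J : Idx) : K14 :=
  if Disjoint I J then ((msign I J : ℤ) : ℂ) • bas m (I ∪ J) else 0

/-- `t^m ∑ᵢ ∂ᵢξ_I ∂ᵢξ_J`. -/
def ddMul (m : ℤ) (I J : Idx) : K14 :=
  ∑ i : Fin 4,
    if i ∈ I ∧ i ∈ J then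
      ((dsign i I * dsign i J : ℤ) : ℂ) • xiMul m (I.erase i) (J.erase i)
    else 0

/-- The contact bracket `[t^m ξ_I, t^n ξ_J]` of `K(1,4)`. -/
def kbrk (m : ℤ) (I : Idx) (n : ℤ) (J : Idx) : K14 :=
  ((2 * n - 2 * m - n * (I.card : ℤ) + m * (J.card : ℤ) : ℤ) : ℂ) • xiMul (m + n - 1) I J
  + ((-1 : ℂ) ^ I.card) • ddMul (m + n) I J

/-!
The coefficient of `t⁻¹ ξ₁₂₃₄` vanishes on every bracket. The term `ξ_I ξ_J` of
`[t^m ξ_I, t^n ξ_J]` can only reach it when `I ⊔ J = {1,2,3,4}` and `m + n = 0`, and then its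
coefficient is `m (|I| + |J| - 4) = 0`; the `∂ᵢξ_I ∂ᵢξ_J` terms always miss `ξᵢ`.
Every other monomial is a nonzero multiple of a bracket with some `t^n`, since
`[t^m ξ_I, t^n] = (2n - 2m - n|I|) t^{m+n-1} ξ_I`.
-/

theorem Finsupp.bilinear_apply_eq_zero_of_single {R α β γ : Type*} [CommSemiring R]
    (B : (α →₀ R) →ₗ[R] (β →₀ R) →ₗ[R] γ →₀ R) (c : γ)
    (h : ∀ a b, B (single a 1) (single b 1) c = 0) (x : α →₀ R) (y : β →₀ R) :
    B x y c = 0 := by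
  have hB : B.compr₂ (lapply c) = 0 :=
    LinearMap.ext_basis Finsupp.basisSingleOne Finsupp.basisSingleOne fun a b => by
      simpa using h a b
  simpa using congr($hB x y)

theorem exists_sub_mul_ne_zero {R : Type*} [Ring R] {a b : R} (h : a ≠ 0 ∨ b ≠ 0) :
    ∃ m : R, a - m * b ≠ 0 := by
  by_cases ha : a = 0
  · exact ⟨-1, by simpa [ha] using h⟩
  · exact ⟨0, by simpa using ha⟩

lemma xiMul_apply_neg_one_univ {m : ℤ} {I J : Idx}
    (h : ¬(m = -1 ∧ Disjoint I J ∧ I ∪ J = univ)) : xiMul m I J (-1, univ) = 0 := by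
  unfold xiMul bas
  split_ifs with hd
  · rw [Finsupp.smul_apply, Finsupp.single_apply, if_neg, smul_zero]
    intro he
    rw [Prod.mk.injEq] at he
    exact h ⟨he.1, hd, he.2⟩
  · rfl

lemma ddMul_apply_neg_one_univ (m : ℤ) (I J : Idx) : ddMul m I J (-1, univ) = 0 := by
  rw [ddMul, Finsupp.finsetSum_apply]
  refine sum_eq_zero fun i _ => ?_
  split_ifs
  · rw [Finsupp.smul_apply, xiMul_apply_neg_one_univ, smul_zero]
    rintro ⟨-, -, hu⟩
    have hi : i ∈ I.erase i ∪ J.erase i := hu ▸ mem_univ i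
    simp at hi
  · rfl

lemma kbrk_apply_neg_one_univ (m n : ℤ) (I J : Idx) : kbrk m I n J (-1, univ) = 0 := by
  rw [kbrk, Finsupp.add_apply, Finsupp.smul_apply, Finsupp.smul_apply,
    ddMul_apply_neg_one_univ, smul_zero, add_zero]
  by_cases h : m + n - 1 = -1 ∧ Disjoint I J ∧ I ∪ J = univ
  · obtain ⟨hmn, hd, hu⟩ := h
    have hcard : (I.card : ℤ) + J.card = 4 := by
      have := card_union_of_disjoint hd
      rw [hu, card_univ, Fintype.card_fin] at this
      exact_mod_cast this.symm
    obtain rfl : n = -m := by omega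
    have hcoef : 2 * -m - 2 * m - -m * (I.card : ℤ) + m * J.card = 0 := by
      linear_combination m * hcard
    rw [hcoef, Int.cast_zero, zero_smul]
  · rw [xiMul_apply_neg_one_univ h, smul_zero]

lemma kbrk_empty_right (m n : ℤ) (I : Idx) :
    kbrk m I n ∅ = ((2 * n - 2 * m - n * I.card : ℤ) : ℂ) • bas (m + n - 1) I := by
  simp [kbrk, ddMul, xiMul, msign]

section Brackets

variable {B : K14 →ₗ[ℂ] K14 →ₗ[ℂ] K14}
  (hB : ∀ (m n : ℤ) (I J : Idx), B (bas m I) (bas n J) = kbrk m I n J)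
include hB

lemma bracket_apply_neg_one_univ (x y : K14) : B x y (-1, univ) = 0 :=
  Finsupp.bilinear_apply_eq_zero_of_single B _
    (fun p q => (DFunLike.congr_fun (hB p.1 q.1 p.2 q.2) _).trans
      (kbrk_apply_neg_one_univ p.1 q.1 p.2 q.2)) x y

lemma bas_mem_span_brackets {k : ℤ} {I : Idx} (h : ¬(k = -1 ∧ I = univ)) :
    bas k I ∈ Submodule.span ℂ {z : K14 | ∃ x y : K14, z = B x y} := by
  have hI : (k + 1) * (2 - I.card : ℤ) ≠ 0 ∨ (4 - I.card : ℤ) ≠ 0 := by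
    by_cases hcard : I.card = 4
    · have hk : k ≠ -1 := fun hk => h ⟨hk, eq_univ_of_card I hcard⟩
      left
      rw [hcard]
      omega
    · right
      omega
  obtain ⟨m, hm⟩ := exists_sub_mul_ne_zero hI
  have hbracket : B (bas m I) (bas (k + 1 - m) ∅)
      = (((k + 1) * (2 - I.card : ℤ) - m * (4 - I.card : ℤ) : ℤ) : ℂ) • bas k I := by
    rw [hB, kbrk_empty_right]
    congr 2 <;> ring
  have hbas : bas k I = (((k + 1) * (2 - I.card : ℤ) - m * (4 - I.card : ℤ) : ℤ) : ℂ)⁻¹ •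
      B (bas m I) (bas (k + 1 - m) ∅) := by
    rw [hbracket, smul_smul, inv_mul_cancel₀ (by exact_mod_cast hm), one_smul]
  rw [hbas]
  exact Submodule.smul_mem _ _ (Submodule.subset_span ⟨_, _, rfl⟩)

lemma span_brackets_le_supported :
    Submodule.span ℂ {z : K14 | ∃ x y : K14, z = B x y}
      ≤ Finsupp.supported ℂ ℂ {p : ℤ × Idx | p ≠ (-1, univ)} := by
  refine Submodule.span_le.2 ?_
  rintro _ ⟨x, y, rfl⟩
  refine (Finsupp.mem_supported' _ _).2 fun p hp => ?_
  rw [Set.mem_ofPred_eq, not_not] at hp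
  exact hp ▸ bracket_apply_neg_one_univ hB x y

end Brackets

lemma span_bas_ne_eq_supported :
    Submodule.span ℂ
        ({z : K14 | ∃ (k : ℤ) (I : Idx), I ≠ univ ∧ z = bas k I}
          ∪ {z : K14 | ∃ l : ℤ, l ≠ -1 ∧ z = bas l univ})
      = Finsupp.supported ℂ ℂ {p : ℤ × Idx | p ≠ (-1, univ)} := by
  rw [Finsupp.supported_eq_span_single]
  congr 1
  ext z
  simp only [Set.mem_union, Set.mem_ofPred_eq, Set.mem_image, bas, ne_eq, Prod.exists,
    Prod.mk.injEq]
  constructor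
  · rintro (⟨k, I, hI, rfl⟩ | ⟨l, hl, rfl⟩)
    · exact ⟨k, I, fun h => hI h.2, rfl⟩
    · exact ⟨l, univ, fun h => hl h.1, rfl⟩
  · rintro ⟨k, I, hkI, rfl⟩
    by_cases hI : I = univ
    · exact Or.inr ⟨k, fun hk => hkI ⟨hk, hI⟩, by rw [hI]⟩
    · exact Or.inl ⟨k, I, hI, rfl⟩

/-- **The element `t⁻¹ ξ₁₂₃₄` does not belong to `K'(1,4) = [K(1,4), K(1,4)]`**
(Proposition 3.4).  More precisely, the derived algebra `K'(1,4)` (the linear span of all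
brackets) is the ℂ-linear span of
`{t^k ξ_I : I ≠ (1,2,3,4), k ∈ ℤ} ∪ {t^l ξ₁₂₃₄ : l ∈ ℤ, l ≠ -1}`. -/
theorem derived_K14
    (B : K14 →ₗ[ℂ] K14 →ₗ[ℂ] K14)
    (hB : ∀ (m n : ℤ) (I J : Idx), B (bas m I) (bas n J) = kbrk m I n J) :
    bas (-1) Finset.univ ∉ Submodule.span ℂ {z : K14 | ∃ x y : K14, z = B x y} ∧
    Submodule.span ℂ {z : K14 | ∃ x y : K14, z = B x y}
      = Submodule.span ℂ
          ({z : K14 | ∃ (k : ℤ) (I : Idx), I ≠ Finset.univ ∧ z = bas k I}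
            ∪ {z : K14 | ∃ l : ℤ, l ≠ -1 ∧ z = bas l Finset.univ}) := by
  have hle := span_brackets_le_supported hB
  have hge : Submodule.span ℂ
      ({z : K14 | ∃ (k : ℤ) (I : Idx), I ≠ univ ∧ z = bas k I}
        ∪ {z : K14 | ∃ l : ℤ, l ≠ -1 ∧ z = bas l univ})
      ≤ Submodule.span ℂ {z : K14 | ∃ x y : K14, z = B x y} := by
    refine Submodule.span_le.2 ?_
    rintro _ (⟨k, I, hI, rfl⟩ | ⟨l, hl, rfl⟩)
    · exact bas_mem_span_brackets hB fun h => hI h.2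
    · exact bas_mem_span_brackets hB fun h => hl h.1
  refine ⟨fun hmem => ?_, le_antisymm (span_bas_ne_eq_supported ▸ hle) hge⟩
  simpa [bas] using (Finsupp.mem_supported' _ _).1 (hle hmem) (-1, univ)

end
end

section
/- For sequences I, L of distinct indices in {1,2,3,4}, v ∈ F and m ≥ 3, the action of t^m ξ_I on η_L⊗v ∈ Ind(F) vanishes, except when m = 3, |I| = 0 and |L| = 4, in which case t^3(η_L⊗v) = −6 ε_L ⊗ Cv. -/
/-!
Core definitions modelling the annihilation superalgebra `𝔤 = 𝒜(K'₄) = K(1,4)₊ ⊕ ℂC`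
and generalized Verma modules `Ind F ≅ ℂ[Θ] ⊗ Λ(η₁,…,η₄) ⊗ F` over it.

Grassmann monomials `ξ_I`/`η_I` (with `I` in increasing order) are indexed by
`Idx = Finset (Fin 4)`.
-/

open Finset

noncomputable section

/-- Sign of the iterated derivative `∂_S η_L = ∂_{s₁} ⋯ ∂_{s_k} η_L` (`s₁ < ⋯ < s_k`,
`S ⊆ L`): `∂_S η_L = ddsign S L • η_{L \ S}`. -/
def ddsign (S L : Idx) : ℤ :=
  (-1 : ℤ) ^ (S.card * (S.card - 1) / 2) *
    (-1 : ℤ) ^ (∑ i ∈ S, ((L \ S).filter (fun j => j < i)).card)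

/-- `epsSign I` is the sign `ε_I` of the permutation `(I, Iᶜ)` of `(1,2,3,4)`. -/
def epsSign (I : Idx) : ℤ := msign I Iᶜ

variable (F : Type*) [AddCommGroup F] [Module ℂ F]

/-- The generalized Verma module `Ind F = ℂ[Θ] ⊗ Λ(η₁,…,η₄) ⊗ F`,
with `(k, L)`-component the coefficient of `Θ^k η_L`. -/
abbrev VInd : Type _ := (ℕ × Idx) →₀ F

variable {F}

/-- Basis-type element `Θ^k η_L ⊗ v` of `Ind F`. -/
def bv (k : ℕ) (L : Idx) (v : F) : VInd F := Finsupp.single (k, L) v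

/-- Action of the central element `C` on `Ind F`: it acts through its action `ρC` on `F`. -/
def Cop (ρC : F →ₗ[ℂ] F) : VInd F →ₗ[ℂ] VInd F := Finsupp.mapRange.linearMap ρC

/-- Multiplication by `Θ` on `Ind F`. -/
def thOp : VInd F →ₗ[ℂ] VInd F := Finsupp.lmapDomain F ℂ (fun p => (p.1 + 1, p.2))

/-- The 2-cocycle `ψ` on `K(1,4)₊` defining the central extension `𝒜(K'₄)`, evaluated on the
basis monomials `t^0 ξ_I`, `t^0 ξ_J`: the only nonzero values are
`ψ(1, ξ₁₂₃₄) = -2`, `ψ(ξ₁₂₃₄, 1) = 2` and `ψ(ξ_i, ξ_{{i}ᶜ}) = ψ(ξ_{{i}ᶜ}, ξ_i) = -∂ᵢ-sign`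
(equivalently `ψ(ξ_i, ∂ᵢξ₁₂₃₄) = -1`). -/
def psi0 (I J : Idx) : ℂ :=
  (if I = (∅ : Idx) ∧ J = (Finset.univ : Idx) then (-2 : ℂ) else 0)
  + (if I = (Finset.univ : Idx) ∧ J = (∅ : Idx) then (2 : ℂ) else 0)
  + ∑ i : Fin 4, (if I = ({i} : Idx) ∧ J = ({i}ᶜ : Idx) then (-(dsign i Finset.univ) : ℂ) else 0)
  + ∑ i : Fin 4, (if I = ({i}ᶜ : Idx) ∧ J = ({i} : Idx) then (-(dsign i Finset.univ) : ℂ) else 0)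

/-- The action on `Ind F` of the bracket `[t^m ξ_I, t^n ξ_J]` in `𝒜(K'₄) = K(1,4)₊ ⊕ ℂC`,
namely of
`(2n-2m-n|I|+m|J|) t^{m+n-1} ξ_{IJ} + (-1)^{|I|} t^{m+n} ∑ᵢ ∂ᵢξ_I ∂ᵢξ_J + ψ(t^mξ_I, t^nξ_J) C`,
expressed through a family `act` of operators (the actions of the `t^m ξ_I`). -/
def brkAct (ρC : F →ₗ[ℂ] F) (act : ℕ → Idx → (VInd F →ₗ[ℂ] VInd F))
    (m : ℕ) (I : Idx) (n : ℕ) (J : Idx) : VInd F →ₗ[ℂ] VInd F :=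
  ((2 * (n : ℤ) - 2 * (m : ℤ) - (n : ℤ) * I.card + (m : ℤ) * J.card : ℤ) : ℂ) •
      (if Disjoint I J then ((msign I J : ℤ) : ℂ) • act (m + n - 1) (I ∪ J) else 0)
  + ((-1 : ℂ) ^ I.card) • (∑ i : Fin 4,
      if i ∈ I ∧ i ∈ J ∧ Disjoint (I.erase i) (J.erase i) then
        ((dsign i I * dsign i J * msign (I.erase i) (J.erase i) : ℤ) : ℂ) •
          act (m + n) (I.erase i ∪ J.erase i)
      else 0)
  + (if m = 0 ∧ n = 0 then psi0 I J else 0) • Cop ρC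

/-- The data of a generalized Verma module over `𝒜(K'₄)`:
the action `ρt, ρC, ρξ i j` of the degree-zero part `𝔤₀ = ⟨C, t, ξ_{ij}⟩` on `F`,
and the action `act m I` of the basis elements `t^m ξ_I` of `K(1,4)₊` on
`Ind F = ℂ[Θ] ⊗ Λ(η) ⊗ F`. -/
structure VermaData (F : Type*) [AddCommGroup F] [Module ℂ F] where
  ρt : F →ₗ[ℂ] F
  ρC : F →ₗ[ℂ] F
  ρξ : Fin 4 → Fin 4 → (F →ₗ[ℂ] F)
  act : ℕ → Idx → (VInd F →ₗ[ℂ] VInd F)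

/-- The properties characterizing the generalized Verma module `Ind F` over `𝒜(K'₄)`:
* `anti` : `ξ_{ij} = -ξ_{ji}`;
* `lie`  : `act` is an action of the Lie superalgebra `𝒜(K'₄) = K(1,4)₊ ⊕ ℂC`
  (with `C` acting through `ρC`);
* `vac_pos` : the positive part `𝔤_{>0}` (spanned by the `t^m ξ_I` with `2m + |I| - 2 > 0`)
  kills the vacuum subspace `1 ⊗ F`;
* `vac_xi`, `vac_t` : `𝔤₀` acts on `1 ⊗ F` through `ρξ`, `ρt`;
* `low_eta`, `low_one` : the negative part acts by left multiplication in
  `U(𝔤_{<0}) = ℂ[Θ] ⊗ Λ(η₁,…,η₄)` (with `η_i² = Θ` and `ξ_∅ = -2Θ`). -/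
structure IsVerma (D : VermaData F) : Prop where
  anti : ∀ i j, D.ρξ i j = - D.ρξ j i
  lie : ∀ (m : ℕ) (I : Idx) (n : ℕ) (J : Idx),
      D.act m I ∘ₗ D.act n J - ((-1 : ℂ) ^ (I.card * J.card)) • (D.act n J ∘ₗ D.act m I)
        = brkAct D.ρC D.act m I n J
  vac_pos : ∀ (v : F) (m : ℕ) (I : Idx), 2 < 2 * m + I.card → D.act m I (bv 0 ∅ v) = 0
  vac_xi : ∀ (v : F) (i j : Fin 4), i < j →
      D.act 0 {i, j} (bv 0 ∅ v) = bv 0 ∅ (D.ρξ i j v)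
  vac_t : ∀ v : F, D.act 1 ∅ (bv 0 ∅ v) = bv 0 ∅ (D.ρt v)
  low_eta : ∀ (v : F) (k : ℕ) (L : Idx) (i : Fin 4),
      D.act 0 {i} (bv k L v) =
        if i ∈ L then ((dsign i L : ℤ) : ℂ) • bv (k + 1) (L.erase i) v
        else ((msign {i} L : ℤ) : ℂ) • bv k (insert i L) v
  low_one : ∀ (v : F) (k : ℕ) (L : Idx),
      D.act 0 ∅ (bv k L v) = (-2 : ℂ) • bv (k + 1) L v

/-- A (nonzero) singular vector: a nonzero vector killed by
`𝔤_{>0} = ⟨t^m ξ_I : 2m + |I| - 2 > 0⟩`. -/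
def IsSingular (D : VermaData F) (u : VInd F) : Prop :=
  u ≠ 0 ∧ ∀ (m : ℕ) (I : Idx), 2 < 2 * m + I.card → D.act m I u = 0

/-- `u` is homogeneous of degree `d` (`Θ^k η_L ⊗ v` has degree `2k + |L|`). -/
def HomogDeg (u : VInd F) (d : ℕ) : Prop := ∀ p ∈ u.support, 2 * p.1 + p.2.card = d

/-- `u` is a highest weight vector: it is killed by the positive root vectors
`e₁ = -ξ₁₃ + i ξ₂₃` and `e₂ = -ξ₂₄ - i ξ₁₄` of `𝔤₀` (0-indexed below). -/
def IsHW (D : VermaData F) (u : VInd F) : Prop :=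
  Complex.I • D.act 0 {1, 2} u - D.act 0 {0, 2} u = 0 ∧
  -(D.act 0 {1, 3} u) - Complex.I • D.act 0 {0, 3} u = 0

/-- `e₁ = e_x + e_y = -ξ₁₃ + i ξ₂₃` acting on `F`. -/
def e1F (D : VermaData F) : F →ₗ[ℂ] F := -(D.ρξ 0 2) + Complex.I • D.ρξ 1 2

/-- `e₂ = e_x - e_y = -ξ₂₄ - i ξ₁₄` acting on `F`. -/
def e2F (D : VermaData F) : F →ₗ[ℂ] F := -(D.ρξ 1 3) - Complex.I • D.ρξ 0 3

/-- `h_x = -iξ₁₂ + iξ₃₄` acting on `F`. -/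
def hxF (D : VermaData F) : F →ₗ[ℂ] F := -(Complex.I • D.ρξ 0 1) + Complex.I • D.ρξ 2 3

/-- `h_y = -iξ₁₂ - iξ₃₄` acting on `F`. -/
def hyF (D : VermaData F) : F →ₗ[ℂ] F := -(Complex.I • D.ρξ 0 1) - Complex.I • D.ρξ 2 3

/-- `f_x = (ξ₁₃ + ξ₂₄ - iξ₁₄ + iξ₂₃)/2` acting on `F`. -/
def fxF (D : VermaData F) : F →ₗ[ℂ] F :=
  (2 : ℂ)⁻¹ • (D.ρξ 0 2 + D.ρξ 1 3 - Complex.I • D.ρξ 0 3 + Complex.I • D.ρξ 1 2)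

/-- `f_y = (ξ₁₃ - ξ₂₄ + iξ₁₄ + iξ₂₃)/2` acting on `F`. -/
def fyF (D : VermaData F) : F →ₗ[ℂ] F :=
  (2 : ℂ)⁻¹ • (D.ρξ 0 2 - D.ρξ 1 3 + Complex.I • D.ρξ 0 3 + Complex.I • D.ρξ 1 2)

/-- `v` is a highest weight vector of `F` of weight `μ = (μ.1, μ.2.1, μ.2.2.1, μ.2.2.2)`
with respect to `(h_x, h_y, t, C)`. -/
def IsHWvec (D : VermaData F) (μ : ℂ × ℂ × ℂ × ℂ) (v : F) : Prop :=
  v ≠ 0 ∧ e1F D v = 0 ∧ e2F D v = 0 ∧ hxF D v = μ.1 • v ∧ hyF D v = μ.2.1 • v ∧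
    D.ρt v = μ.2.2.1 • v ∧ D.ρC v = μ.2.2.2 • v

/-- `F` is an irreducible `𝔤₀`-module. -/
def IsIrred (D : VermaData F) : Prop :=
  (∃ v : F, v ≠ 0) ∧ ∀ p : Submodule ℂ F,
    (∀ v ∈ p, D.ρt v ∈ p ∧ D.ρC v ∈ p ∧ ∀ i j, D.ρξ i j v ∈ p) → p = ⊥ ∨ p = ⊤

/-- The commutative-in-`Θ` algebra `U(𝔤_{<0}) = ℂ[Θ] ⊗ Λ(η₁,…,η₄)` (as a ℂ-module with
basis `Θ^k η_L`). -/
abbrev CA : Type := (ℕ × Idx) →₀ ℂ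

/-- Multiplication in `U(𝔤_{<0})` (`η_i² = Θ`, `Θ` central, `η_i η_j = -η_j η_i`). -/
def cmul (x y : CA) : CA :=
  x.sum fun p c => y.sum fun q c' =>
    Finsupp.single (p.1 + q.1 + (p.2 ∩ q.2).card, (p.2 \ q.2) ∪ (q.2 \ p.2))
      (c * c' * ((msign p.2 q.2 : ℤ) : ℂ))

/-- `w₁₁ = η₂ + i η₁`. -/
def w11 : CA := Finsupp.single (0, ({1} : Idx)) 1 + Complex.I • Finsupp.single (0, ({0} : Idx)) 1
/-- `w₂₂ = η₂ - i η₁`. -/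
def w22 : CA := Finsupp.single (0, ({1} : Idx)) 1 - Complex.I • Finsupp.single (0, ({0} : Idx)) 1
/-- `w₁₂ = -η₄ + i η₃`. -/
def w12 : CA := -Finsupp.single (0, ({3} : Idx)) 1 + Complex.I • Finsupp.single (0, ({2} : Idx)) 1
/-- `w₂₁ = η₄ + i η₃`. -/
def w21 : CA := Finsupp.single (0, ({3} : Idx)) 1 + Complex.I • Finsupp.single (0, ({2} : Idx)) 1

/-- `a ⊗ v ∈ U(𝔤_{<0}) ⊗ F = Ind F`. -/
def tens (a : CA) (v : F) : VInd F := a.sum fun p c => Finsupp.single p (c • v)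

end

noncomputable section Helpers
open Finset
variable {F : Type*} [AddCommGroup F] [Module ℂ F]

lemma Cop_bv (ρC : F →ₗ[ℂ] F) (k : ℕ) (L : Idx) (v : F) :
    Cop ρC (bv k L v) = bv k L (ρC v) := by
  simp [Cop, bv]

lemma msign_mul_self_c (I J : Idx) : ((msign I J : ℤ):ℂ) * ((msign I J : ℤ):ℂ) = 1 := by
  unfold msign
  push_cast
  rw [← mul_pow]
  norm_num

lemma lie_apply (D : VermaData F) (hD : IsVerma D) (m : ℕ) (I : Idx) (n : ℕ) (J : Idx)
    (u : VInd F) :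
    D.act m I (D.act n J u) = ((-1:ℂ)^(I.card * J.card)) • D.act n J (D.act m I u)
      + brkAct D.ρC D.act m I n J u := by
  have h := LinearMap.congr_fun (hD.lie m I n J) u
  simp only [LinearMap.sub_apply, LinearMap.smul_apply, LinearMap.comp_apply] at h
  rw [sub_eq_iff_eq_add] at h
  rw [h]; abel

end Helpers
noncomputable section Helpers2
open Finset
variable {F : Type*} [AddCommGroup F] [Module ℂ F]

lemma erase_singleton' (j : Fin 4) : ({j} : Idx).erase j = ∅ := by
  simp

lemma dsign_self_singleton (j : Fin 4) : dsign j {j} = 1 := by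
  unfold dsign
  rw [Finset.filter_singleton, if_neg (lt_irrefl j)]
  simp

lemma msign_empty_right (I : Idx) : msign I ∅ = 1 := by
  unfold msign
  simp

lemma brkAct_eta (ρC : F →ₗ[ℂ] F) (act : ℕ → Idx → (VInd F →ₗ[ℂ] VInd F))
    (n : ℕ) (J : Idx) (j : Fin 4) :
    brkAct ρC act n J 0 {j} =
      (-(n:ℂ)) • (if Disjoint J {j} then ((msign J {j} : ℤ):ℂ) • act (n-1) (J ∪ {j}) else 0)
      + ((-1:ℂ)^J.card) • (if j ∈ J then ((dsign j J : ℤ):ℂ) • act n (J.erase j) else 0)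
      + (if n = 0 then psi0 J {j} else 0) • Cop ρC := by
  unfold brkAct
  congr 1
  congr 1
  · congr 1
    · push_cast
      simp
      ring
  · congr 1
    rw [Finset.sum_eq_single_of_mem j (Finset.mem_univ j)]
    · rw [erase_singleton']
      by_cases hj : j ∈ J
      · rw [if_pos ⟨hj, Finset.mem_singleton_self j, Finset.disjoint_empty_right _⟩, if_pos hj]
        rw [dsign_self_singleton, msign_empty_right]
        simp
      · rw [if_neg (by tauto), if_neg hj]
    · intro i _ hij
      rw [if_neg]
      rintro ⟨-, hmem, -⟩
      exact hij (Finset.mem_singleton.mp hmem)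
  · simp

lemma act_eta (D : VermaData F) (hD : IsVerma D) (n : ℕ) (J : Idx) (j : Fin 4) (u : VInd F) :
    D.act n J (D.act 0 {j} u) =
      ((-1:ℂ)^J.card) • D.act 0 {j} (D.act n J u)
      + (-(n:ℂ)) • (if Disjoint J {j} then ((msign J {j} : ℤ):ℂ) • D.act (n-1) (J ∪ {j}) u else 0)
      + ((-1:ℂ)^J.card) • (if j ∈ J then ((dsign j J : ℤ):ℂ) • D.act n (J.erase j) u else 0)
      + (if n = 0 then psi0 J {j} else 0) • Cop D.ρC u := by
  rw [lie_apply D hD n J 0 {j} u, brkAct_eta]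
  simp only [Finset.card_singleton, mul_one, LinearMap.add_apply, LinearMap.smul_apply,
    LinearMap.zero_apply]
  split_ifs <;>
    simp only [LinearMap.smul_apply, LinearMap.zero_apply, smul_zero, add_zero, zero_add] <;>
    module

end Helpers2
noncomputable section Helpers3
open Finset
variable {F : Type*} [AddCommGroup F] [Module ℂ F]

lemma psi0_univ_singleton (j : Fin 4) : psi0 (Finset.univ : Idx) {j} = 0 := by
  have h1 : (Finset.univ : Idx) ≠ ∅ := by decide
  have h2 : ({j} : Idx) ≠ ∅ := Finset.singleton_ne_empty j
  have h3 : ∀ i : Fin 4, (Finset.univ : Idx) ≠ {i} := by decide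
  have h4 : ∀ i : Fin 4, (Finset.univ : Idx) ≠ {i}ᶜ := by decide
  simp [psi0, h1, h2, h3, h4]

lemma card_le_four (L : Idx) : L.card ≤ 4 := by
  simpa using Finset.card_le_univ L

lemma actV (D : VermaData F) (hD : IsVerma D) :
    ∀ (L : Idx), ∀ (n : ℕ) (J : Idx) (v : F), L.card + 2 < 2*n + J.card →
      D.act n J (bv 0 L v) = 0 := by
  intro L
  induction L using Finset.strongInduction with
  | _ L IH =>
    intro n J v h
    rcases L.eq_empty_or_nonempty with rfl | hL
    · exact hD.vac_pos v n J (by simpa using h)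
    obtain ⟨j, hj⟩ := hL
    have hj' : j ∉ L.erase j := Finset.notMem_erase j L
    have hsub : L.erase j ⊂ L := Finset.erase_ssubset hj
    have hcard : (L.erase j).card + 1 = L.card := Finset.card_erase_add_one hj
    have hlow := hD.low_eta v 0 (L.erase j) j
    rw [if_neg hj', Finset.insert_erase hj] at hlow
    have key := act_eta D hD n J j (bv 0 (L.erase j) v)
    rw [hlow, map_smul] at key
    -- kill each RHS term
    have h1 : D.act n J (bv 0 (L.erase j) v) = 0 := IH _ hsub n J v (by omega)
    rw [h1, map_zero, smul_zero] at key
    have h2 : (-(n:ℂ)) • (if Disjoint J {j} then ((msign J {j} : ℤ):ℂ) •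
        D.act (n-1) (J ∪ {j}) (bv 0 (L.erase j) v) else 0) = 0 := by
      rcases Nat.eq_zero_or_pos n with rfl | hn
      · simp
      · split_ifs with hd
        · have hc : (J ∪ {j}).card = J.card + 1 := by
            rw [Finset.card_union_of_disjoint hd, Finset.card_singleton]
          rw [IH _ hsub (n-1) (J ∪ {j}) v (by omega), smul_zero, smul_zero]
        · simp
    rw [h2] at key
    have h3 : ((-1:ℂ)^J.card) • (if j ∈ J then ((dsign j J : ℤ):ℂ) •
        D.act n (J.erase j) (bv 0 (L.erase j) v) else 0) = 0 := by
      split_ifs with hd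
      · have hc : (J.erase j).card + 1 = J.card := Finset.card_erase_add_one hd
        rw [IH _ hsub n (J.erase j) v (by omega), smul_zero, smul_zero]
      · simp
    rw [h3] at key
    have h4 : (if n = 0 then psi0 J {j} else 0) • Cop D.ρC (bv 0 (L.erase j) v) = 0 := by
      rcases Nat.eq_zero_or_pos n with rfl | hn
      · have hJ : J = Finset.univ := by
          apply Finset.eq_univ_of_card
          have := card_le_four J
          simp only [Fintype.card_fin]
          omega
        rw [if_pos rfl, hJ, psi0_univ_singleton, zero_smul]
      · rw [if_neg (by omega), zero_smul]
    rw [h4] at key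
    simp only [add_zero, zero_add] at key
    have := congrArg (fun x => ((msign {j} (L.erase j) : ℤ):ℂ) • x) key
    simpa [smul_smul, msign_mul_self_c] using this

end Helpers3
noncomputable section Helpers4
open Finset
variable {F : Type*} [AddCommGroup F] [Module ℂ F]

lemma psi0_val : psi0 ({0,1,2} : Idx) {3} = 1 := by
  unfold psi0
  rw [if_neg (by decide), if_neg (by decide), Fin.sum_univ_four, Fin.sum_univ_four,
    if_neg (by decide), if_neg (by decide), if_neg (by decide), if_neg (by decide),
    if_neg (by decide), if_neg (by decide), if_neg (by decide),
    if_pos (by decide : ({0,1,2} : Idx) = ({(3 : Fin 4)} : Idx)ᶜ ∧ ({3} : Idx) = {(3 : Fin 4)})]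
  rw [(by decide : dsign 3 Finset.univ = -1)]
  norm_num
end Helpers4
noncomputable section Helpers5
open Finset
variable {F : Type*} [AddCommGroup F] [Module ℂ F]

lemma chain (D : VermaData F) (hD : IsVerma D) (v : F) :
    D.act 3 ∅ (bv 0 (Finset.univ : Idx) v) = (-6:ℂ) • bv 0 ∅ (D.ρC v) := by
  have c4 : D.act 0 {3} (bv 0 (∅:Idx) v) = bv 0 ({3}:Idx) v := by
    have h := hD.low_eta v 0 ∅ 3
    rw [if_neg (by decide)] at h
    rw [h, (by decide : msign ({3}:Idx) ∅ = 1)]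
    norm_num
  have c3 : D.act 0 {0,1,2} (bv 0 ({3}:Idx) v) = bv 0 ∅ (D.ρC v) := by
    have e := act_eta D hD 0 {0,1,2} 3 (bv 0 (∅:Idx) v)
    rw [c4, hD.vac_pos v 0 {0,1,2} (by decide), map_zero, smul_zero,
      if_neg (by decide : ¬ (3:Fin 4) ∈ ({0,1,2}:Idx)), if_pos rfl, psi0_val, Cop_bv] at e
    simpa using e
  have c2 : D.act 1 {0,1} (bv 0 ({2,3}:Idx) v) = -(bv 0 ∅ (D.ρC v)) := by
    have hl : D.act 0 {2} (bv 0 ({3}:Idx) v) = bv 0 ({2,3}:Idx) v := by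
      have h := hD.low_eta v 0 {3} 2
      rw [if_neg (by decide)] at h
      rw [h, (by decide : msign ({2}:Idx) {3} = 1),
        (by decide : insert (2:Fin 4) ({3}:Idx) = ({2,3}:Idx))]
      norm_num
    have e := act_eta D hD 1 {0,1} 2 (bv 0 ({3}:Idx) v)
    rw [hl, actV D hD {3} 1 {0,1} v (by decide), map_zero, smul_zero,
      if_pos (by decide : Disjoint ({0,1}:Idx) {2}),
      if_neg (by decide : ¬ (2:Fin 4) ∈ ({0,1}:Idx)), if_neg (by norm_num),
      (by decide : msign ({0,1}:Idx) {2} = 1),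
      (by decide : ({0,1}:Idx) ∪ {2} = ({0,1,2}:Idx)), c3] at e
    rw [e]
    push_cast
    module
  have c1 : D.act 2 {0} (bv 0 ({1,2,3}:Idx) v) = (2:ℂ) • bv 0 ∅ (D.ρC v) := by
    have hl : D.act 0 {1} (bv 0 ({2,3}:Idx) v) = bv 0 ({1,2,3}:Idx) v := by
      have h := hD.low_eta v 0 {2,3} 1
      rw [if_neg (by decide)] at h
      rw [h, (by decide : msign ({1}:Idx) {2,3} = 1),
        (by decide : insert (1:Fin 4) ({2,3}:Idx) = ({1,2,3}:Idx))]
      norm_num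
    have e := act_eta D hD 2 {0} 1 (bv 0 ({2,3}:Idx) v)
    rw [hl, actV D hD {2,3} 2 {0} v (by decide), map_zero, smul_zero,
      if_pos (by decide : Disjoint ({0}:Idx) {1}),
      if_neg (by decide : ¬ (1:Fin 4) ∈ ({0}:Idx)), if_neg (by norm_num),
      (by decide : msign ({0}:Idx) {1} = 1),
      (by decide : ({0}:Idx) ∪ {1} = ({0,1}:Idx)), c2] at e
    rw [e]
    push_cast
    module
  have hl : D.act 0 {0} (bv 0 ({1,2,3}:Idx) v) = bv 0 (Finset.univ:Idx) v := by
    have h := hD.low_eta v 0 {1,2,3} 0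
    rw [if_neg (by decide)] at h
    rw [h, (by decide : msign ({0}:Idx) {1,2,3} = 1),
      (by decide : insert (0:Fin 4) ({1,2,3}:Idx) = (Finset.univ:Idx))]
    norm_num
  have e := act_eta D hD 3 ∅ 0 (bv 0 ({1,2,3}:Idx) v)
  rw [hl, actV D hD {1,2,3} 3 ∅ v (by decide), map_zero, smul_zero,
    if_pos (by decide : Disjoint (∅:Idx) {0}),
    if_neg (by decide : ¬ (0:Fin 4) ∈ (∅:Idx)), if_neg (by norm_num),
    (by decide : msign (∅:Idx) {0} = 1),
    (by decide : (∅:Idx) ∪ {0} = ({0}:Idx)), c1] at e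
  rw [e]
  push_cast
  module
end Helpers5

/-- **High coefficients of the `λ`-action** (Lemma `deg3`).
For sequences `I, L` of distinct indices in `{1,2,3,4}` (encoded as finsets), `v ∈ F` and
`m ≥ 3`, the action of `t^m ξ_I` on `η_L ⊗ v ∈ Ind F` vanishes, except when
`m = 3`, `|I| = 0` and `|L| = 4`, in which case `t³(η_L ⊗ v) = -6 ε_L ⊗ Cv`. -/
theorem high_lambda_coefficients_vanish
    (F : Type*) [AddCommGroup F] [Module ℂ F] [FiniteDimensional ℂ F]
    (D : VermaData F) (hD : IsVerma D) (hirr : IsIrred D) :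
    ∀ (I L : Idx) (v : F) (m : ℕ), 3 ≤ m →
      D.act m I (bv 0 L v) =
        if m = 3 ∧ I = ∅ ∧ L.card = 4 then
          ((-6 : ℂ) * (epsSign L : ℤ)) • bv 0 ∅ (D.ρC v)
        else 0 := by
  intro I L v m hm
  by_cases hs : m = 3 ∧ I = ∅ ∧ L.card = 4
  · rw [if_pos hs]
    obtain ⟨rfl, rfl, hL4⟩ := hs
    have hLuniv : L = Finset.univ := Finset.eq_univ_of_card L (by simpa using hL4)
    subst hLuniv
    rw [chain D hD v, (by decide : epsSign (Finset.univ : Idx) = 1)]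
    norm_num
  · rw [if_neg hs]
    apply actV D hD
    have hL := card_le_four L
    by_cases hI : I = ∅
    · subst hI
      simp only [Finset.card_empty]
      rcases Nat.lt_or_ge m 4 with h4 | h4
      · have hm3 : m = 3 := by omega
        subst hm3
        have : L.card ≠ 4 := fun hc => hs ⟨rfl, rfl, hc⟩
        omega
      · omega
    · have : 1 ≤ I.card := Finset.card_pos.mpr (Finset.nonempty_iff_ne_empty.mpr hI)
      omega
end

section
/- Recursive formula for the λ-action on Θ-powers: for any sequence I of distinct indices in {1,2,3,4}, any g ∈ U(g_{<0}), v ∈ F and k ∈ ℤ_{>0}, one has ξ_I λ (Θ^k g ⊗ v) = (Θ+λ)·(ξ_I λ (Θ^{k−1} g ⊗ v)) − χ_{|I|=4} ε_I Θ^{k−1} g ⊗ Cv. -/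
/-!
Core definitions modelling the annihilation superalgebra `𝔤 = 𝒜(K'₄) = K(1,4)₊ ⊕ ℂC`
and generalized Verma modules `Ind F ≅ ℂ[Θ] ⊗ Λ(η₁,…,η₄) ⊗ F` over it.

Grassmann monomials `ξ_I`/`η_I` (with `I` in increasing order) are indexed by
`Idx = Finset (Fin 4)`.
-/

open Finset

lemma act_empty_eq {F : Type*} [AddCommGroup F] [Module ℂ F]
    (D : VermaData F) (hD : IsVerma D) :
    D.act 0 (∅ : Idx) = (-2 : ℂ) • (thOp : VInd F →ₗ[ℂ] VInd F) := by
  apply Finsupp.lhom_ext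
  intro p v
  obtain ⟨k, L⟩ := p
  have h := hD.low_one v k L
  simpa [bv, thOp, Finsupp.lmapDomain, Finsupp.mapDomain_single] using h

lemma epsSign_univ : epsSign (Finset.univ : Idx) = 1 := by decide

lemma brk_empty {F : Type*} [AddCommGroup F] [Module ℂ F]
    (ρC : F →ₗ[ℂ] F) (act : ℕ → Idx → (VInd F →ₗ[ℂ] VInd F)) (m : ℕ) (I : Idx) :
    brkAct ρC act m I 0 ∅ =
      ((-2 * (m : ℂ)) • act (m - 1) I)
        + (if I = Finset.univ ∧ m = 0 then (2 : ℂ) else 0) • Cop ρC := by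
  have hpsi : psi0 I ∅ = if I = Finset.univ then (2 : ℂ) else 0 := by
    unfold psi0
    have h1 : ¬ (I = (∅ : Idx) ∧ (∅ : Idx) = (Finset.univ : Idx)) := by
      rintro ⟨-, h⟩; exact absurd h (by decide)
    rw [if_neg h1]
    have h2 : ∀ i : Fin 4, ¬ (I = ({i} : Idx) ∧ (∅ : Idx) = ({i}ᶜ : Idx)) := by
      intro i; rintro ⟨-, h⟩
      have hc := congrArg Finset.card h
      simp [Finset.card_compl] at hc
    have h3 : ∀ i : Fin 4, ¬ (I = ({i}ᶜ : Idx) ∧ (∅ : Idx) = ({i} : Idx)) := by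
      intro i; rintro ⟨-, h⟩
      exact absurd h.symm (by simp)
    simp only [h2, h3, if_false, Finset.sum_const_zero, add_zero, zero_add]
    by_cases hI : I = Finset.univ
    · simp [hI]
    · simp [hI]
  unfold brkAct
  have hdisj : Disjoint I (∅ : Idx) := Finset.disjoint_empty_right I
  rw [if_pos hdisj]
  have hms : msign I (∅ : Idx) = 1 := by
    unfold msign; simp
  have hsum : (∑ i : Fin 4,
      if i ∈ I ∧ i ∈ (∅ : Idx) ∧ Disjoint (I.erase i) ((∅ : Idx).erase i) then
        ((dsign i I * dsign i (∅ : Idx) * msign (I.erase i) ((∅ : Idx).erase i) : ℤ) : ℂ) •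
          act (m + 0) (I.erase i ∪ (∅ : Idx).erase i)
      else 0) = 0 := by
    apply Finset.sum_eq_zero
    intro i _
    rw [if_neg]
    rintro ⟨-, h, -⟩
    exact absurd h (Finset.notMem_empty i)
  have hcoef : ((2 * ((0 : ℕ) : ℤ) - 2 * (m : ℤ) - ((0 : ℕ) : ℤ) * I.card
      + (m : ℤ) * ((∅ : Idx).card) : ℤ) : ℂ) = -2 * (m : ℂ) := by
    simp only [Finset.card_empty]
    push_cast
    ring
  rw [hsum, hms, hpsi, hcoef]
  simp only [Finset.union_empty, Nat.add_zero, Int.cast_one, one_smul, smul_zero, add_zero]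
  congr 1
  by_cases hI : I = Finset.univ <;> by_cases hm : m = 0 <;> simp [hI, hm]

/-- **Recursive formula for the `λ`-action on `Θ`-powers** (Lemma `actiontheta`).
For any sequence `I` of distinct indices, any `g ∈ U(𝔤_{<0})`, `v ∈ F` and `k > 0`,
`ξ_I ∙_λ (Θ^k g ⊗ v) = (Θ + λ) (ξ_I ∙_λ (Θ^{k-1} g ⊗ v)) - χ_{|I|=4} ε_I Θ^{k-1} g ⊗ Cv`.
Writing `x = Θ^{k-1} g ⊗ v` (an arbitrary element of `Ind F`), this reads, coefficientwise
in `λ` (with `t^m ξ_I = m! ⋅ (λ^m`-coefficient`)`):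
`(t^m ξ_I).(Θ x) = Θ ((t^m ξ_I).x) + m (t^{m-1} ξ_I).x - χ_{m=0} χ_{|I|=4} ε_I C x`. -/
theorem lambda_action_theta_recursion
    (F : Type*) [AddCommGroup F] [Module ℂ F] [FiniteDimensional ℂ F]
    (D : VermaData F) (hD : IsVerma D) (hirr : IsIrred D) :
    ∀ (I : Idx) (x : VInd F) (m : ℕ),
      D.act m I (thOp x) =
        thOp (D.act m I x) + (m : ℂ) • D.act (m - 1) I x
          - (if I = Finset.univ ∧ m = 0 then ((epsSign Finset.univ : ℤ) : ℂ) • Cop D.ρC x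
             else 0) := by
  intro I x m
  have hlie := hD.lie m I 0 ∅
  rw [brk_empty] at hlie
  have hE := act_empty_eq D hD
  have happ := congrArg (fun f : VInd F →ₗ[ℂ] VInd F => f x) hlie
  simp only [Finset.card_empty, mul_zero, pow_zero, one_smul, LinearMap.sub_apply,
    LinearMap.comp_apply, LinearMap.add_apply, LinearMap.smul_apply, hE] at happ
  -- happ : D.act m I ((-2)•thOp x) - (-2)•thOp (D.act m I x)
  --   = (-2*m)•D.act (m-1) I x + (if ...)• Cop D.ρC x
  have h2 : (-2 : ℂ) ≠ 0 := by norm_num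
  rw [epsSign_univ]
  by_cases hc : I = Finset.univ ∧ m = 0
  · rw [if_pos hc] at happ ⊢
    simp only [map_smul] at happ
    have := congrArg (fun y => (-2 : ℂ)⁻¹ • y) happ
    simp only [smul_sub, smul_add, smul_smul] at this
    rw [show ((-2 : ℂ)⁻¹ * (-2 : ℂ)) = 1 by norm_num] at this
    simp only [one_smul] at this
    have key : D.act m I (thOp x) - thOp (D.act m I x)
        = (m : ℂ) • D.act (m - 1) I x - Cop D.ρC x := by
      have := this
      rw [show ((-2 : ℂ)⁻¹ * (-2 * (m : ℂ))) = (m : ℂ) by ring,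
        show ((-2 : ℂ)⁻¹ * (2 : ℂ)) = -1 by norm_num] at this
      rw [this]; abel_nf; simp [neg_smul]
    simp only [Int.cast_one, one_smul]
    rw [sub_eq_iff_eq_add] at key
    rw [key]; abel
  · rw [if_neg hc] at happ ⊢
    simp only [map_smul, zero_smul, add_zero] at happ
    have := congrArg (fun y => (-2 : ℂ)⁻¹ • y) happ
    simp only [smul_sub, smul_smul] at this
    rw [show ((-2 : ℂ)⁻¹ * (-2 : ℂ)) = 1 by norm_num,
      show ((-2 : ℂ)⁻¹ * (-2 * (m : ℂ))) = (m : ℂ) by ring] at this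
    simp only [one_smul] at this
    rw [sub_eq_iff_eq_add] at this
    rw [this]; abel
end
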